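/- For all real numbers a, b, c, p > 0, the integral ∫_0^∞ exp( − a z^{2/p} / (b + c z^{1/p}) ) dz is finite and bounded by c_p · max( (b/a)^{p/2}, (c/a)^p ), where c_p = 2 ∫_0^∞ exp( − (1/2) (min(z, √z))^{2/p} ) dz, and c_p is finite. -/

import Mathlib

open MeasureTheory Real Set

/-!
Put `M = max ((b/a)^(p/2)) ((c/a)^p)`, so that `b ≤ a M^(2/p)` and `c ≤ a M^(1/p)`. Writing
`z = M u` and `t = u^(1/p)`, the exponent `a z^(2/p) / (b + c z^(1/p))` is then at least
`t² / (1 + t) ≥ min(t², t) / 2 = min(u, √u)^(2/p) / 2`. Hence the integrand is dominated by the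
integrand of `c_p` evaluated at `z / M`, and the change of variables `z = M u` yields the factor
`M`. The integrand of `c_p` is integrable since it equals `exp(-u^(1/p) / 2)` for `u ≥ 1`.
-/

lemma rpow_two_div_eq_sq {x : ℝ} (hx : 0 ≤ x) (p : ℝ) : x ^ (2 / p) = (x ^ (1 / p)) ^ 2 := by
  rw [← rpow_mul_natCast hx]; ring_nf

lemma integrableOn_exp_neg_mul_rpow_Ioi {k s : ℝ} (hk : 0 < k) (hs : 0 < s) :
    IntegrableOn (fun x : ℝ => exp (-k * x ^ s)) (Ioi 0) := by
  simpa using integrableOn_rpow_mul_exp_neg_mul_rpow neg_one_lt_zero hs hk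

lemma min_sqrt_rpow_of_one_le {x : ℝ} (hx : 1 ≤ x) (p : ℝ) :
    (min x √x) ^ (2 / p) = x ^ (1 / p) := by
  rw [min_eq_right (sqrt_le_self_iff.mpr (Or.inr hx)), sqrt_eq_rpow,
    ← rpow_mul (by linarith)]
  ring_nf

lemma integrableOn_exp_neg_half_min_sqrt_rpow {p : ℝ} (hp : 0 < p) :
    IntegrableOn (fun z : ℝ => exp (-(1 / 2) * (min z √z) ^ (2 / p))) (Ioi 0) := by
  have hcont : Continuous fun z : ℝ => exp (-(1 / 2) * (min z √z) ^ (2 / p)) := by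
    refine continuous_exp.comp (continuous_const.mul ?_)
    exact (continuous_id.min continuous_sqrt).rpow_const fun _ => Or.inr (by positivity)
  rw [← Ioc_union_Ioi_eq_Ioi zero_le_one, integrableOn_union]
  refine ⟨hcont.integrableOn_Ioc, ?_⟩
  refine ((integrableOn_exp_neg_mul_rpow_Ioi (k := 1 / 2) (by norm_num)
    (one_div_pos.mpr hp)).mono_set (Ioi_subset_Ioi zero_le_one)).congr_fun
    (fun x hx => ?_) measurableSet_Ioi
  simp only [min_sqrt_rpow_of_one_le hx.le]

lemma half_min_sqrt_rpow_le {p u : ℝ} (hp : 0 < p) (hu : 0 ≤ u) :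
    1 / 2 * (min u √u) ^ (2 / p) ≤ u ^ (2 / p) / (1 + u ^ (1 / p)) := by
  have ht : 0 ≤ u ^ (1 / p) := rpow_nonneg hu _
  rw [le_div_iff₀ (by positivity)]
  rcases le_total u 1 with hu1 | hu1
  · have ht1 : u ^ (1 / p) ≤ 1 := rpow_le_one hu hu1 (by positivity)
    rw [min_eq_left (le_sqrt_self_iff.mpr hu1), rpow_two_div_eq_sq hu]
    nlinarith
  · have ht1 : 1 ≤ u ^ (1 / p) := one_le_rpow hu1 (by positivity)
    rw [min_sqrt_rpow_of_one_le hu1, rpow_two_div_eq_sq hu]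
    nlinarith

lemma rpow_div_one_add_rpow_le {a b c p M z : ℝ} (ha : 0 < a) (hb : 0 < b) (hc : 0 ≤ c)
    (hM : 0 < M) (hz : 0 ≤ z)
    (hbM : b ≤ a * M ^ (2 / p)) (hcM : c ≤ a * M ^ (1 / p)) :
    (M⁻¹ * z) ^ (2 / p) / (1 + (M⁻¹ * z) ^ (1 / p)) ≤ a * z ^ (2 / p) / (b + c * z ^ (1 / p)) := by
  rw [rpow_two_div_eq_sq (by positivity), rpow_two_div_eq_sq hz, mul_rpow (by positivity) hz,
    inv_rpow hM.le]
  rw [rpow_two_div_eq_sq hM.le] at hbM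
  have hm : 0 < M ^ (1 / p) := by positivity
  have ht : 0 ≤ z ^ (1 / p) := by positivity
  generalize M ^ (1 / p) = m at *
  generalize z ^ (1 / p) = t at *
  calc (m⁻¹ * t) ^ 2 / (1 + m⁻¹ * t) = a * t ^ 2 / (a * m ^ 2 + a * m * t) := by
        field_simp
    _ ≤ a * t ^ 2 / (b + c * t) := by gcongr

lemma le_mul_rpow_inv_of_div_rpow_le {a b r M : ℝ} (ha : 0 < a) (hb : 0 ≤ b) (hr : 0 < r)
    (hM : 0 ≤ M) (h : (b / a) ^ r ≤ M) : b ≤ a * M ^ r⁻¹ :=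
  (div_le_iff₀' ha).mp ((le_rpow_inv_iff_of_pos (by positivity) hM hr).mpr h)

lemma integrableOn_Ioi_comp_inv_mul {g : ℝ → ℝ} {M : ℝ} (hM : 0 < M)
    (hg : IntegrableOn g (Ioi 0)) : IntegrableOn (fun z => g (M⁻¹ * z)) (Ioi 0) :=
  (integrableOn_Ioi_comp_mul_left_iff g 0 (inv_pos.mpr hM)).mpr (by simpa using hg)

lemma integrableOn_Ioi_of_le_comp_inv_mul {f g : ℝ → ℝ} {M : ℝ} (hM : 0 < M)
    (hf : AEStronglyMeasurable f (volume.restrict (Ioi 0))) (hf₀ : ∀ z ∈ Ioi 0, 0 ≤ f z)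
    (hg : IntegrableOn g (Ioi 0)) (hfg : ∀ z ∈ Ioi 0, f z ≤ g (M⁻¹ * z)) :
    IntegrableOn f (Ioi 0) := by
  refine (integrableOn_Ioi_comp_inv_mul hM hg).mono' hf ?_
  filter_upwards [ae_restrict_mem measurableSet_Ioi] with z hz
  rw [Real.norm_of_nonneg (hf₀ z hz)]
  exact hfg z hz

lemma setIntegral_Ioi_le_mul_of_le_comp_inv_mul {f g : ℝ → ℝ} {M : ℝ} (hM : 0 < M)
    (hf : IntegrableOn f (Ioi 0)) (hg : IntegrableOn g (Ioi 0))
    (hfg : ∀ z ∈ Ioi 0, f z ≤ g (M⁻¹ * z)) :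
    ∫ z in Ioi 0, f z ≤ M * ∫ z in Ioi 0, g z := by
  calc ∫ z in Ioi 0, f z ≤ ∫ z in Ioi 0, g (M⁻¹ * z) :=
        setIntegral_mono_on hf (integrableOn_Ioi_comp_inv_mul hM hg) measurableSet_Ioi hfg
    _ = M * ∫ z in Ioi 0, g z := by
        simp [integral_comp_mul_left_Ioi g 0 (inv_pos.mpr hM)]

/-- For all real `a, b, c, p > 0`, the integral
`∫_0^∞ exp(−a z^{2/p} / (b + c z^{1/p})) dz` is finite and bounded by
`c_p · max((b/a)^{p/2}, (c/a)^p)`, where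
`c_p = 2 ∫_0^∞ exp(−(1/2)(min(z, √z))^{2/p}) dz` is finite. -/
theorem stmt_1 (a b c p : ℝ) (ha : 0 < a) (hb : 0 < b) (hc : 0 < c) (hp : 0 < p) :
    IntegrableOn (fun z : ℝ => Real.exp (-(a * z ^ (2 / p)) / (b + c * z ^ (1 / p))))
      (Set.Ioi 0) ∧
    IntegrableOn (fun z : ℝ => Real.exp (-(1 / 2) * (min z (Real.sqrt z)) ^ (2 / p)))
      (Set.Ioi 0) ∧
    (∫ z in Set.Ioi (0 : ℝ), Real.exp (-(a * z ^ (2 / p)) / (b + c * z ^ (1 / p)))) ≤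
      (2 * ∫ z in Set.Ioi (0 : ℝ), Real.exp (-(1 / 2) * (min z (Real.sqrt z)) ^ (2 / p))) *
        max ((b / a) ^ (p / 2)) ((c / a) ^ p) := by
  set M := max ((b / a) ^ (p / 2)) ((c / a) ^ p)
  have hM : 0 < M := lt_max_of_lt_left (by positivity)
  have hbM : b ≤ a * M ^ (2 / p) := by
    simpa [inv_div] using
      le_mul_rpow_inv_of_div_rpow_le ha hb.le (half_pos hp) hM.le (le_max_left _ _)
  have hcM : c ≤ a * M ^ (1 / p) := by
    simpa [one_div] using le_mul_rpow_inv_of_div_rpow_le ha hc.le hp hM.le (le_max_right _ _)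
  have hg := integrableOn_exp_neg_half_min_sqrt_rpow hp
  have hfg : ∀ z ∈ Ioi (0 : ℝ), exp (-(a * z ^ (2 / p)) / (b + c * z ^ (1 / p))) ≤
      exp (-(1 / 2) * (min (M⁻¹ * z) √(M⁻¹ * z)) ^ (2 / p)) := fun z hz => by
    rw [exp_le_exp, neg_div, neg_mul, neg_le_neg_iff]
    exact (half_min_sqrt_rpow_le hp (mul_pos (inv_pos.mpr hM) hz).le).trans
      (rpow_div_one_add_rpow_le ha hb hc.le hM hz.le hbM hcM)
  have hf := integrableOn_Ioi_of_le_comp_inv_mul hM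
    (by fun_prop : Measurable _).aestronglyMeasurable (fun _ _ => (exp_pos _).le) hg hfg
  refine ⟨hf, hg, (setIntegral_Ioi_le_mul_of_le_comp_inv_mul hM hf hg hfg).trans ?_⟩
  have hg₀ : 0 ≤ ∫ z in Ioi (0 : ℝ), exp (-(1 / 2) * (min z √z) ^ (2 / p)) :=
    setIntegral_nonneg measurableSet_Ioi fun _ _ => (exp_pos _).le
  nlinarith
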